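/- arXiv:2502.15967 — 2 statements merged into one kernel-verified Lean document; each statement's English description precedes it below -/
import Mathlib

section
/- Let G be a finite nilpotent group that is not a p-group for any prime p, and let A ≤ Aut(G). Then Δ(G,A) is connected with diameter at most 3. -/
/-!
Elements of coprime orders commute in a finite nilpotent group (it is the direct product of its
Sylow subgroups), and commuting elements `s`, `t` of coprime orders generate the cyclic group
`⟨s * t⟩`. Hence, for a prime `r` dividing `|G|`, every `x ≠ 1` is equal or adjacent to an element
of order `r`: a power of `x` if `r ∣ o(x)`, any element of order `r` otherwise. With two primes
`p ≠ q` dividing `|G|`, elements of orders `p` and `q` are adjacent, so any two vertices are joined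
by a path `x — z_p — z_q — y`.
-/

open Subgroup

/-- The A-orbit of x under a subgroup A of Aut(G). -/
def aorb {G : Type*} [Group G] (A : Subgroup (MulAut G)) (x : G) : Set G :=
  {y | ∃ a ∈ A, a x = y}

/-- The vertex set of the automorphic cyclic graph: A-orbits of nontrivial elements. -/
def DeltaVerts (G : Type*) [Group G] (A : Subgroup (MulAut G)) :=
  {S : Set G // ∃ x : G, x ≠ 1 ∧ S = aorb A x}

/-- The automorphic cyclic graph Δ(G,A). -/
def Delta (G : Type*) [Group G] (A : Subgroup (MulAut G)) :
    SimpleGraph (DeltaVerts G A) where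
  Adj S T := S ≠ T ∧ ∃ x ∈ S.1, ∃ y ∈ T.1,
    IsCyclic (Subgroup.closure {x, y} : Subgroup G)
  symm := ⟨by
    rintro S T ⟨hne, x, hx, y, hy, hc⟩
    exact ⟨hne.symm, y, hy, x, hx, by rwa [Set.pair_comm]⟩⟩
  loopless := ⟨fun S h => h.1 rfl⟩

/-- The vertex corresponding to the A-orbit of a nontrivial element x. -/
def vtx {G : Type*} [Group G] (A : Subgroup (MulAut G)) (x : G) (hx : x ≠ 1) :
    DeltaVerts G A :=
  ⟨aorb A x, x, hx, rfl⟩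

theorem SimpleGraph.connected_and_dist_le_of_edist_le {V : Type*} [Nonempty V]
    {Γ : SimpleGraph V} {n : ℕ} (h : ∀ u v, Γ.edist u v ≤ n) :
    Γ.Connected ∧ ∀ u v, Γ.dist u v ≤ n := by
  have hreach : ∀ u v, Γ.Reachable u v := fun u v =>
    reachable_of_edist_ne_top (ne_top_of_le_ne_top (ENat.natCast_ne_top n) (h u v))
  refine ⟨⟨hreach⟩, fun u v => ?_⟩
  have := (hreach u v).coe_dist_eq_edist ▸ h u v
  exact_mod_cast this

section Group

variable {G : Type*} [Group G]

theorem ne_one_of_orderOf_eq_prime {z : G} {r : ℕ} (hr : r.Prime) (hz : orderOf z = r) :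
    z ≠ 1 := fun h1 => hr.ne_one (hz ▸ orderOf_eq_one_iff.mpr h1)

theorem IsPGroup.eq_one_or_eq_one_of_coprime {p : ℕ} [Fact p.Prime] (hG : IsPGroup p G)
    {a b : G} (h : (orderOf a).Coprime (orderOf b)) : a = 1 ∨ b = 1 := by
  obtain ⟨m, hm⟩ := IsPGroup.iff_orderOf.mp hG a
  obtain ⟨n, hn⟩ := IsPGroup.iff_orderOf.mp hG b
  rcases m.eq_zero_or_pos with rfl | hm0
  · exact .inl (orderOf_eq_one_iff.mp hm)
  rcases n.eq_zero_or_pos with rfl | hn0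
  · exact .inr (orderOf_eq_one_iff.mp hn)
  rw [hm, hn, Nat.coprime_pow_left_iff hm0, Nat.coprime_pow_right_iff hn0, Nat.coprime_self] at h
  exact absurd h (Fact.out : p.Prime).one_lt.ne'

theorem Group.IsNilpotent.commute_of_coprime_orderOf [Finite G] [Group.IsNilpotent G]
    {s t : G} (h : (orderOf s).Coprime (orderOf t)) : Commute s t := by
  obtain ⟨e⟩ := (Group.isNilpotent_of_finite_tfae (G := G)).out 0 4 |>.mp ‹_›
  rw [← e.apply_symm_apply s, ← e.apply_symm_apply t]
  refine Commute.map (Pi.commute_iff.mpr fun p => Pi.commute_iff.mpr fun P => ?_) e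
  have : Fact (p : ℕ).Prime := ⟨Nat.prime_of_mem_primeFactors p.2⟩
  have hdvd : ∀ g : G, orderOf (e.symm g p P) ∣ orderOf g := fun g =>
    ((orderOf_apply_dvd_orderOf (x := e.symm g p) P).trans
      (orderOf_apply_dvd_orderOf (x := e.symm g) p)).trans
      (e.symm.orderOf_eq g).dvd
  rcases P.isPGroup'.eq_one_or_eq_one_of_coprime
    ((h.coprime_dvd_left (hdvd s)).coprime_dvd_right (hdvd t)) with h1 | h1 <;> rw [h1]
  exacts [Commute.one_left _, Commute.one_right _]

theorem Commute.mem_zpowers_mul_of_coprime {s t : G} (hc : Commute s t)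
    (h : (orderOf s).Coprime (orderOf t)) : s ∈ zpowers (s * t) := by
  have hpow : (s * t) ^ orderOf t = s ^ orderOf t := by
    rw [hc.mul_pow, pow_orderOf_eq_one, mul_one]
  refine zpowers_le.mpr ?_ (mem_zpowers_pow_iff.mpr h.symm)
  exact hpow ▸ pow_mem (mem_zpowers _) _

theorem Commute.isCyclic_closure_pair_of_coprime {s t : G} (hc : Commute s t)
    (h : (orderOf s).Coprime (orderOf t)) : IsCyclic (closure ({s, t} : Set G)) := by
  have hle : closure ({s, t} : Set G) ≤ zpowers (s * t) := by
    rw [closure_le, Set.insert_subset_iff, Set.singleton_subset_iff]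
    refine ⟨hc.mem_zpowers_mul_of_coprime h, ?_⟩
    exact hc.eq ▸ hc.symm.mem_zpowers_mul_of_coprime h.symm
  exact isCyclic_of_le hle

theorem Group.IsNilpotent.isCyclic_closure_pair_of_coprime [Finite G] [Group.IsNilpotent G]
    {s t : G} (h : (orderOf s).Coprime (orderOf t)) : IsCyclic (closure ({s, t} : Set G)) :=
  (commute_of_coprime_orderOf h).isCyclic_closure_pair_of_coprime h

theorem exists_orderOf_eq_prime_isCyclic_closure_pair [Finite G] [Group.IsNilpotent G] (x : G)
    {r : ℕ} (hr : r.Prime) (hrG : r ∣ Nat.card G) :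
    ∃ z : G, orderOf z = r ∧ IsCyclic (closure ({x, z} : Set G)) := by
  have : Fact r.Prime := ⟨hr⟩
  by_cases hdvd : r ∣ orderOf x
  · obtain ⟨z, hz⟩ := exists_prime_orderOf_dvd_card' (G := zpowers x) r
      ((Nat.card_zpowers x).symm ▸ hdvd)
    have hle : closure ({x, (z : G)} : Set G) ≤ zpowers x :=
      (closure_le _).mpr <|
        Set.insert_subset_iff.mpr ⟨mem_zpowers x, Set.singleton_subset_iff.mpr z.2⟩
    exact ⟨z, orderOf_coe z ▸ hz, isCyclic_of_le hle⟩
  · obtain ⟨z, hz⟩ := exists_prime_orderOf_dvd_card' r hrG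
    have hco : (orderOf x).Coprime (orderOf z) := hz ▸ (hr.coprime_iff_not_dvd.mpr hdvd).symm
    exact ⟨z, hz, Group.IsNilpotent.isCyclic_closure_pair_of_coprime hco⟩

end Group

section Delta

variable {G : Type*} [Group G] {A : Subgroup (MulAut G)}

theorem DeltaVerts.exists_eq_vtx (u : DeltaVerts G A) :
    ∃ x, ∃ hx : x ≠ 1, u = vtx A x hx := by
  obtain ⟨x, hx, hu⟩ := u.2
  exact ⟨x, hx, Subtype.ext hu⟩

theorem Delta.edist_vtx_le_one {x y : G} (hx : x ≠ 1) (hy : y ≠ 1)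
    (h : IsCyclic (closure ({x, y} : Set G))) :
    (Delta G A).edist (vtx A x hx) (vtx A y hy) ≤ 1 :=
  SimpleGraph.edist_le_one_iff_adj_or_eq.mpr <| or_iff_not_imp_right.mpr fun hne =>
    ⟨hne, x, ⟨1, one_mem A, rfl⟩, y, ⟨1, one_mem A, rfl⟩, h⟩

theorem Delta.exists_orderOf_eq_prime_edist_vtx_le_one [Finite G] [Group.IsNilpotent G]
    {x : G} (hx : x ≠ 1) {r : ℕ} (hr : r.Prime) (hrG : r ∣ Nat.card G) :
    ∃ z, ∃ hz : z ≠ 1, orderOf z = r ∧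
      (Delta G A).edist (vtx A x hx) (vtx A z hz) ≤ 1 := by
  obtain ⟨z, hz, hcyc⟩ := exists_orderOf_eq_prime_isCyclic_closure_pair x hr hrG
  have hz1 := ne_one_of_orderOf_eq_prime hr hz
  exact ⟨z, hz1, hz, Delta.edist_vtx_le_one hx hz1 hcyc⟩

end Delta

theorem stmt6 {G : Type*} [Group G] [Finite G] (A : Subgroup (MulAut G))
    [Group.IsNilpotent G]
    (h : ∃ p q : ℕ, p.Prime ∧ q.Prime ∧ p ≠ q ∧ p ∣ Nat.card G ∧ q ∣ Nat.card G) :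
    (Delta G A).Connected ∧ ∀ u v : DeltaVerts G A, (Delta G A).dist u v ≤ 3 := by
  obtain ⟨p, q, hp, hq, hpq, hpG, hqG⟩ := h
  obtain ⟨a, ha⟩ := exists_prime_orderOf_dvd_card' (hp := ⟨hp⟩) p hpG
  have : Nonempty (DeltaVerts G A) := ⟨vtx A a (ne_one_of_orderOf_eq_prime hp ha)⟩
  refine SimpleGraph.connected_and_dist_le_of_edist_le fun u v => ?_
  obtain ⟨x, hx, rfl⟩ := u.exists_eq_vtx
  obtain ⟨y, hy, rfl⟩ := v.exists_eq_vtx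
  obtain ⟨zp, hzp, hzp_ord, hx_zp⟩ := Delta.exists_orderOf_eq_prime_edist_vtx_le_one hx hp hpG
  obtain ⟨zq, hzq, hzq_ord, hy_zq⟩ := Delta.exists_orderOf_eq_prime_edist_vtx_le_one hy hq hqG
  have hco : (orderOf zp).Coprime (orderOf zq) :=
    hzp_ord ▸ hzq_ord ▸ (Nat.coprime_primes hp hq).mpr hpq
  have hzp_zq := Delta.edist_vtx_le_one (A := A) hzp hzq
    (Group.IsNilpotent.isCyclic_closure_pair_of_coprime hco)
  calc (Delta G A).edist (vtx A x hx) (vtx A y hy)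
      ≤ (Delta G A).edist (vtx A x hx) (vtx A zp hzp) + ((Delta G A).edist (vtx A zp hzp)
          (vtx A zq hzq) + (Delta G A).edist (vtx A zq hzq) (vtx A y hy)) :=
        SimpleGraph.edist_triangle.trans (add_le_add_right SimpleGraph.edist_triangle _)
    _ ≤ 1 + (1 + 1) := by
        gcongr
        rwa [SimpleGraph.edist_comm]
    _ = 3 := by norm_num
end

section
/- Let G be a finite group, A ≤ Aut(G), and x ∈ G \ {1} such that the conjugacy class x^G is A-invariant (e.g. if A ≤ Inn(G)). If x^A is a universal vertex of Δ(G,A), then ⟨x,y⟩ is cyclic for every y ∈ G (i.e., x ∈ K(G)). -/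
/-!
Universality of the vertex x^A gives every y an A-image a x of x with ⟨a x, y⟩ cyclic. As a x is
a G-conjugate of x, every y has a conjugate commuting with x: the centralizer of x meets every
conjugacy class, so by Jordan's lemma it is all of G. Then x is central, the conjugation can be
undone, and ⟨x, y⟩ itself is cyclic.
-/

open Subgroup

open MulAction

namespace Subgroup

variable {G : Type*} [Group G]

theorem isCyclic_closure_pair_map {H : Type*} [Group H] (e : G ≃* H) {u v : G}
    (h : IsCyclic (closure {u, v} : Subgroup G)) :
    IsCyclic (closure {e u, e v} : Subgroup H) := by
  have hmap : (closure {u, v}).map (e : G →* H) = closure {e u, e v} := by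
    rw [MonoidHom.map_closure, Set.image_pair]
    rfl
  exact hmap ▸ (e.subgroupMap _).isCyclic.mp h

theorem commute_of_isCyclic_closure_pair {u v : G}
    (h : IsCyclic (closure {u, v} : Subgroup G)) : Commute u v :=
  setLike_mul_comm (s := closure {u, v}) (subset_closure (by simp)) (subset_closure (by simp))

theorem isCyclic_closure_pair_one (u : G) : IsCyclic (closure {u, 1} : Subgroup G) := by
  rw [Set.pair_comm, closure_insert_one, ← zpowers_eq_closure]
  infer_instance

theorem isCyclic_closure_pair_self (u : G) : IsCyclic (closure {u, u} : Subgroup G) := by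
  rw [Set.pair_eq_singleton, ← zpowers_eq_closure]
  infer_instance

/- Every g fixes a point of G ⧸ H, while by Burnside the average number of fixed points is the
number of orbits, 1. Hence the identity fixes exactly one point, i.e. H has index 1. -/
theorem eq_top_of_forall_exists_conj_mem [Finite G] (H : Subgroup G)
    (h : ∀ g : G, ∃ k : G, k⁻¹ * g * k ∈ H) : H = ⊤ := by
  classical
  have := Fintype.ofFinite G
  have hfix : ∀ g : G, 1 ≤ Fintype.card (fixedBy (G ⧸ H) g) := fun g => by
    obtain ⟨k, hk⟩ := h g
    refine Fintype.card_pos_iff.mpr ⟨⟨(k : G ⧸ H), QuotientGroup.eq.mpr ?_⟩⟩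
    simpa [mul_assoc] using H.inv_mem hk
  have hburnside := sum_card_fixedBy_eq_card_orbits_mul_card_group G (G ⧸ H)
  obtain ⟨_⟩ := (pretransitive_iff_unique_quotient_of_nonempty G (G ⧸ H)).mp inferInstance
  rw [Fintype.card_unique, one_mul, ← Finset.card_univ, Finset.card_eq_sum_ones] at hburnside
  have hfix_one := (Finset.sum_eq_sum_iff_of_le fun g _ => hfix g).mp hburnside.symm 1
    (Finset.mem_univ _)
  rw [← index_eq_one, index, Nat.card_eq_fintype_card, hfix_one]
  simp [fixedBy_one_eq_univ]

theorem mem_center_of_forall_exists_commute_conj [Finite G] {x : G}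
    (h : ∀ y : G, ∃ g : G, Commute x (MulAut.conj g y)) : x ∈ center G := by
  have hcent : centralizer {x} = ⊤ := eq_top_of_forall_exists_conj_mem _ fun y => by
    obtain ⟨g, hg⟩ := h y
    exact ⟨g⁻¹, mem_centralizer_singleton_iff.mpr (by simpa using hg.eq.symm)⟩
  exact mem_center_iff.mpr fun g => mem_centralizer_singleton_iff.mp (hcent ▸ mem_top g)

end Subgroup

section Delta

variable {G : Type*} [Group G] {A : Subgroup (MulAut G)} {x : G}

theorem mem_aorb_self (A : Subgroup (MulAut G)) (x : G) : x ∈ aorb A x :=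
  ⟨1, A.one_mem, rfl⟩

theorem map_mem_aorb {a : MulAut G} (ha : a ∈ A) {y : G} (hy : y ∈ aorb A x) :
    a y ∈ aorb A x := by
  obtain ⟨b, hb, rfl⟩ := hy
  exact ⟨a * b, A.mul_mem ha hb, rfl⟩

theorem mem_aorb_of_vtx_eq {y : G} {hx : x ≠ 1} {hy : y ≠ 1} (h : vtx A y hy = vtx A x hx) :
    y ∈ aorb A x := by
  have horb : aorb A y = aorb A x := congrArg Subtype.val h
  exact horb ▸ mem_aorb_self A y

theorem exists_mem_aorb_isCyclic_closure_pair_of_adj {y : G} {hx : x ≠ 1} {hy : y ≠ 1}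
    (h : (Delta G A).Adj (vtx A x hx) (vtx A y hy)) :
    ∃ x' ∈ aorb A x, IsCyclic (closure {x', y} : Subgroup G) := by
  obtain ⟨-, x', hx', _, ⟨b, hb, rfl⟩, hcyc⟩ := h
  refine ⟨b⁻¹ x', map_mem_aorb (A.inv_mem hb) hx', ?_⟩
  have hcyc' := isCyclic_closure_pair_map (b⁻¹ : MulAut G) hcyc
  rwa [MulAut.inv_apply_self] at hcyc'

theorem exists_mem_aorb_isCyclic_closure_pair (hx : x ≠ 1)
    (huniv : ∀ T : DeltaVerts G A, T ≠ vtx A x hx → (Delta G A).Adj (vtx A x hx) T) (y : G) :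
    ∃ x' ∈ aorb A x, IsCyclic (closure {x', y} : Subgroup G) := by
  by_cases hy : y = 1
  · exact ⟨x, mem_aorb_self A x, hy ▸ isCyclic_closure_pair_one x⟩
  by_cases hT : vtx A y hy = vtx A x hx
  · exact ⟨y, mem_aorb_of_vtx_eq hT, isCyclic_closure_pair_self y⟩
  · exact exists_mem_aorb_isCyclic_closure_pair_of_adj (huniv _ hT)

theorem exists_conj_isCyclic_closure_pair (hx : x ≠ 1)
    (hinv : ∀ a ∈ A, ∃ g : G, a x = g⁻¹ * x * g)
    (huniv : ∀ T : DeltaVerts G A, T ≠ vtx A x hx → (Delta G A).Adj (vtx A x hx) T) (y : G) :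
    ∃ g : G, IsCyclic (closure {x, MulAut.conj g y} : Subgroup G) := by
  obtain ⟨_, ⟨a, ha, rfl⟩, hcyc⟩ := exists_mem_aorb_isCyclic_closure_pair hx huniv y
  obtain ⟨g, hg⟩ := hinv a ha
  rw [hg, ← MulAut.conj_inv_apply] at hcyc
  have hcyc' := isCyclic_closure_pair_map (MulAut.conj g) hcyc
  rw [MulAut.apply_inv_self] at hcyc'
  exact ⟨g, hcyc'⟩

end Delta

theorem stmt11 {G : Type*} [Group G] [Finite G] (A : Subgroup (MulAut G))
    (x : G) (hx : x ≠ 1)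
    (hinv : ∀ a ∈ A, ∃ g : G, a x = g⁻¹ * x * g)
    (huniv : ∀ T : DeltaVerts G A, T ≠ vtx A x hx → (Delta G A).Adj (vtx A x hx) T) :
    ∀ y : G, IsCyclic (Subgroup.closure {x, y} : Subgroup G) := by
  have hconj := exists_conj_isCyclic_closure_pair hx hinv huniv
  have hcentral : x ∈ center G := mem_center_of_forall_exists_commute_conj fun y =>
    (hconj y).imp fun _ => commute_of_isCyclic_closure_pair
  intro y
  obtain ⟨g, hg⟩ := hconj y
  have hfix : (MulAut.conj g)⁻¹ x = x := by
    rw [MulAut.conj_inv_apply, mul_assoc, ← mem_center_iff.mp hcentral g, inv_mul_cancel_left]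
  have hcyc := isCyclic_closure_pair_map (MulAut.conj g)⁻¹ hg
  rwa [hfix, MulAut.inv_apply_self] at hcyc
end
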